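/- The Cayley embedding R_cayley equals the set of all (x, y, z) ∈ ℝ^η × ℝ × ℝ^d with x ∈ D and z ∈ Δ^d such that: for every ᾱ ∈ ℝ^η, y ≤ ᾱ · x + Σ_{k=1}^d ( max_{x' ∈ D_{|k}} (w^k − ᾱ) · x' + b^k ) z_k, and for every α̲ ∈ ℝ^η, y ≥ α̲ · x + Σ_{k=1}^d ( min_{x' ∈ D_{|k}} (w^k − α̲) · x' + b^k ) z_k. -/

import Mathlib

open scoped Pointwise

noncomputable section

/-- Dot product on `Fin n → ℝ`. -/
def dotp {n : ℕ} (w x : Fin n → ℝ) : ℝ := ∑ i, w i * x i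

/-- The affine function `f^k(x) = w^k ⬝ x + b^k`. -/
def affK {η d : ℕ} (w : Fin d → Fin η → ℝ) (b : Fin d → ℝ) (k : Fin d) (x : Fin η → ℝ) : ℝ :=
  dotp (w k) x + b k

/-- `D_{|k}`: the part of the domain where `f^k` attains the maximum. -/
def DrestrK {η d : ℕ} (D : Set (Fin η → ℝ)) (w : Fin d → Fin η → ℝ) (b : Fin d → ℝ)
    (k : Fin d) : Set (Fin η → ℝ) :=
  {x ∈ D | ∀ ℓ, affK w b ℓ x ≤ affK w b k x}

/-- `S_cayley = ∪_k {(x, f^k(x), e^k) : x ∈ D_{|k}}`. -/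
def Scayley {η d : ℕ} (D : Set (Fin η → ℝ)) (w : Fin d → Fin η → ℝ) (b : Fin d → ℝ) :
    Set ((Fin η → ℝ) × ℝ × (Fin d → ℝ)) :=
  ⋃ k, (fun x => (x, affK w b k x, Pi.single k (1 : ℝ))) '' DrestrK D w b k

/-- The Cayley embedding `R_cayley = conv(S_cayley)`. -/
def Rcayley {η d : ℕ} (D : Set (Fin η → ℝ)) (w : Fin d → Fin η → ℝ) (b : Fin d → ℝ) :
    Set ((Fin η → ℝ) × ℝ × (Fin d → ℝ)) :=
  convexHull ℝ (Scayley D w b)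

/-!
Both sides are convex, and each generator `(x, f^k(x), e^k)` with `x ∈ D_{|k}` satisfies the
inequalities because `f^k(x) = ᾱ ⬝ x + (w^k - ᾱ) ⬝ x + b^k`. Conversely, `R_cayley` is compact, so
a point outside it is strictly separated from it by a functional `(α, β, γ)`. For `β ≠ 0`, the
inequality with `ᾱ = -α / β` (the upper one if `β > 0`, the lower one if `β < 0`) bounds the
functional at the point by a convex combination of its values at generators, where the extremum
over `D_{|k}` is attained: a contradiction. The case `β = 0` is the limit `β → 0⁺` of the case
`β > 0`.
-/

open Function Filter Topology

-- By Carathéodory, every point of the hull is a convex combination of `finrank + 1` points of `s`.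
theorem IsCompact.convexHull {E : Type*} [NormedAddCommGroup E] [NormedSpace ℝ E]
    [FiniteDimensional ℝ E] {s : Set E} (hs : IsCompact s) : IsCompact (convexHull ℝ s) := by
  let N := Module.finrank ℝ E + 1
  let comb : (Fin N → ℝ) × (Fin N → E) → E := fun p => ∑ i, p.1 i • p.2 i
  suffices _root_.convexHull ℝ s = comb '' (stdSimplex ℝ (Fin N) ×ˢ Set.univ.pi fun _ => s) by
    rw [this]
    exact ((isCompact_stdSimplex _ _).prod (isCompact_univ_pi fun _ => hs)).image
      (by fun_prop)
  refine subset_antisymm (fun x hx => ?_) ?_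
  · obtain ⟨ι, _, v, c, hvs, hind, hc0, hc1, rfl⟩ := eq_pos_convex_span_of_mem_convexHull hx
    obtain ⟨e⟩ : Nonempty (ι ↪ Fin N) := Function.Embedding.nonempty_of_card_le <| by
      simpa [N] using hind.card_le_finrank_succ.trans
        (Nat.add_le_add_right (Submodule.finrank_le _) 1)
    obtain ⟨i₀⟩ : Nonempty ι := by
      by_contra h
      simp [not_nonempty_iff.mp h] at hc1
    refine ⟨(extend e c 0, extend e v fun _ => v i₀), ⟨⟨fun j => ?_, ?_⟩, fun j _ => ?_⟩, ?_⟩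
    · show 0 ≤ extend e c 0 j
      rcases Set.range_extend_subset e c 0 ⟨j, rfl⟩ with ⟨i, hi⟩ | ⟨j', -, hj'⟩
      · exact hi ▸ (hc0 i).le
      · exact hj' ▸ le_rfl
    · show ∑ j, extend e c 0 j = 1
      rw [← hc1]
      exact (Fintype.sum_of_injective e e.injective c _ (fun j hj => extend_apply' c _ j hj)
        fun i => (e.injective.extend_apply c (0 : Fin N → ℝ) i).symm).symm
    · show extend e v (fun _ => v i₀) j ∈ s
      rcases Set.range_extend_subset e v _ ⟨j, rfl⟩ with ⟨i, hi⟩ | ⟨j', -, hj'⟩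
      · exact hi ▸ hvs ⟨i, rfl⟩
      · exact hj' ▸ hvs ⟨i₀, rfl⟩
    · refine (Fintype.sum_of_injective e e.injective _ _ (fun j hj => ?_) fun i => ?_).symm
      · simp [extend_apply' _ _ _ hj]
      · simp [e.injective.extend_apply]
  · rintro _ ⟨p, ⟨hw, hv⟩, rfl⟩
    exact (convex_convexHull ℝ s).sum_mem (fun i _ => hw.1 i) hw.2
      fun i _ => subset_convexHull ℝ s (hv i trivial)

theorem le_of_forall_pos_le_add_mul {a b c : ℝ} (h : ∀ ε > 0, a ≤ b + ε * c) : a ≤ b := by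
  have hlim : Tendsto (fun ε => b + ε * c) (𝓝[>] 0) (𝓝 b) :=
    ((by fun_prop : Continuous fun ε : ℝ => b + ε * c).tendsto' 0 b (by simp)).mono_left
      nhdsWithin_le_nhds
  exact ge_of_tendsto hlim (eventually_nhdsWithin_of_forall h)

theorem dotProduct_le_of_mem_stdSimplex {ι : Type*} [Fintype ι] {z t : ι → ℝ} {u : ℝ}
    (hz : z ∈ stdSimplex ℝ ι) (ht : ∀ i, t i ≤ u) : t ⬝ᵥ z ≤ u :=
  calc t ⬝ᵥ z ≤ ∑ i, u * z i :=
        Finset.sum_le_sum fun i _ => mul_le_mul_of_nonneg_right (ht i) (hz.1 i)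
    _ = u := by rw [← Finset.mul_sum, hz.2, mul_one]

theorem LinearMap.apply_eq_dotProduct {ι R : Type*} [Fintype ι] [DecidableEq ι] [CommSemiring R]
    (g : (ι → R) →ₗ[R] R) (x : ι → R) : g x = (fun i => g (Pi.single i 1)) ⬝ᵥ x := by
  conv_lhs => rw [← Finset.univ_sum_single x]
  simp only [map_sum, dotProduct]
  refine Finset.sum_congr rfl fun i _ => ?_
  rw [show Pi.single i (x i) = x i • Pi.single i (1 : R) by rw [← Pi.single_smul', smul_eq_mul,
    mul_one], map_smul, smul_eq_mul, mul_comm]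

theorem LinearMap.apply_prod_prod_eq {m n : ℕ} (f : ((Fin m → ℝ) × ℝ × (Fin n → ℝ)) →ₗ[ℝ] ℝ)
    (p : (Fin m → ℝ) × ℝ × (Fin n → ℝ)) :
    f p = (fun i => f (Pi.single i 1, 0, 0)) ⬝ᵥ p.1 + f (0, 1, 0) * p.2.1
      + (fun k => f (0, 0, Pi.single k 1)) ⬝ᵥ p.2.2 := by
  obtain ⟨x, y, z⟩ := p
  have hsplit : ((x, y, z) : (Fin m → ℝ) × ℝ × (Fin n → ℝ))
      = (x, 0, 0) + y • (0, 1, 0) + (0, 0, z) := by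
    ext <;> simp
  have hx := (f ∘ₗ LinearMap.inl ℝ _ _).apply_eq_dotProduct x
  have hz := (f ∘ₗ LinearMap.inr ℝ _ _ ∘ₗ LinearMap.inr ℝ _ _).apply_eq_dotProduct z
  simp only [LinearMap.comp_apply, LinearMap.inl_apply, LinearMap.inr_apply,
    ← Prod.mk_zero_zero] at hx hz
  rw [congrArg f hsplit, map_add, map_add, map_smul, smul_eq_mul, mul_comm y, hx, hz]

theorem add_mul_add_dotProduct_le {ι : Type*} [Fintype ι] {m : ℕ} {α x : Fin m → ℝ} {β y u : ℝ}
    {γ c z : ι → ℝ} (hβ : β ≠ 0) (hz : z ∈ stdSimplex ℝ ι) (hc : ∀ k, β * c k + γ k ≤ u)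
    (hy : β * y ≤ β * ((-β⁻¹ • α) ⬝ᵥ x + c ⬝ᵥ z)) : α ⬝ᵥ x + β * y + γ ⬝ᵥ z ≤ u :=
  calc α ⬝ᵥ x + β * y + γ ⬝ᵥ z ≤ α ⬝ᵥ x + β * ((-β⁻¹ • α) ⬝ᵥ x + c ⬝ᵥ z) + γ ⬝ᵥ z := by linarith
    _ = (β • c + γ) ⬝ᵥ z := by
      rw [neg_smul, neg_dotProduct, smul_dotProduct, add_dotProduct, smul_dotProduct, smul_eq_mul,
        smul_eq_mul]
      field_simp
      ring
    _ ≤ u := dotProduct_le_of_mem_stdSimplex hz hc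

section Cayley

variable {η d : ℕ} (K : Fin d → Set (Fin η → ℝ)) (w : Fin d → Fin η → ℝ) (b : Fin d → ℝ)

def cayleyHull : Set ((Fin η → ℝ) × ℝ × (Fin d → ℝ)) :=
  convexHull ℝ (⋃ k, (fun x => (x, affK w b k x, Pi.single k (1 : ℝ))) '' K k)

def upperCoeff (a : Fin η → ℝ) (k : Fin d) : ℝ := sSup ((fun x => (w k - a) ⬝ᵥ x) '' K k) + b k

def lowerCoeff (a : Fin η → ℝ) (k : Fin d) : ℝ := sInf ((fun x => (w k - a) ⬝ᵥ x) '' K k) + b k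

def cayleyEnvelope : Set ((Fin η → ℝ) × ℝ × (Fin d → ℝ)) :=
  {p | p.2.2 ∈ stdSimplex ℝ (Fin d)
    ∧ (∀ a, p.2.1 ≤ a ⬝ᵥ p.1 + upperCoeff K w b a ⬝ᵥ p.2.2)
    ∧ ∀ a, a ⬝ᵥ p.1 + lowerCoeff K w b a ⬝ᵥ p.2.2 ≤ p.2.1}

variable {K w b}

theorem affK_eq (k : Fin d) (x : Fin η → ℝ) : affK w b k x = w k ⬝ᵥ x + b k := rfl

@[fun_prop]
theorem continuous_affK (k : Fin d) : Continuous (affK w b k) := by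
  unfold affK dotp
  fun_prop

theorem convex_cayleyEnvelope : Convex ℝ (cayleyEnvelope K w b) := by
  have hform (a : Fin η → ℝ) (c : Fin d → ℝ) :
      IsLinearMap ℝ fun p : (Fin η → ℝ) × ℝ × (Fin d → ℝ) => a ⬝ᵥ p.1 + c ⬝ᵥ p.2.2 - p.2.1 :=
    ⟨fun p q => by simp only [Prod.fst_add, Prod.snd_add, dotProduct_add]; ring,
      fun t p => by simp only [Prod.smul_fst, Prod.smul_snd, dotProduct_smul, smul_eq_mul]; ring⟩
  have hsimplex : Convex ℝ {p : (Fin η → ℝ) × ℝ × (Fin d → ℝ) | p.2.2 ∈ stdSimplex ℝ (Fin d)} :=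
    (convex_stdSimplex ℝ _).linear_preimage (LinearMap.snd ℝ _ _ ∘ₗ LinearMap.snd ℝ _ _)
  simp only [cayleyEnvelope, Set.ofPred_and, Set.ofPred_forall]
  refine hsimplex.inter ((convex_iInter fun a => ?_).inter (convex_iInter fun a => ?_))
  · simpa only [sub_nonneg] using convex_halfSpace_ge (hform a (upperCoeff K w b a)) 0
  · simpa only [sub_nonpos] using convex_halfSpace_le (hform a (lowerCoeff K w b a)) 0

theorem cayleyHull_subset_cayleyEnvelope (hK : ∀ k, IsCompact (K k)) :
    cayleyHull K w b ⊆ cayleyEnvelope K w b := by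
  refine convexHull_min (Set.iUnion_subset fun k => ?_) convex_cayleyEnvelope
  rintro _ ⟨x, hx, rfl⟩
  have hbdd (a : Fin η → ℝ) : IsCompact ((fun x => (w k - a) ⬝ᵥ x) '' K k) :=
    (hK k).image (by fun_prop)
  refine ⟨single_mem_stdSimplex ℝ k, fun a => ?_, fun a => ?_⟩ <;>
    simp only [dotProduct_single, mul_one, upperCoeff, lowerCoeff, affK_eq]
  · have := le_csSup (hbdd a).bddAbove ⟨x, hx, rfl⟩
    linarith [sub_dotProduct (w k) a x]
  · have := csInf_le (hbdd a).bddBelow ⟨x, hx, rfl⟩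
    linarith [sub_dotProduct (w k) a x]

theorem isCompact_cayleyHull (hK : ∀ k, IsCompact (K k)) : IsCompact (cayleyHull K w b) :=
  (isCompact_iUnion fun k => (hK k).image (by fun_prop)).convexHull

theorem exists_upperCoeff_eq {k : Fin d} (hne : (K k).Nonempty) (hK : IsCompact (K k))
    (a : Fin η → ℝ) : ∃ x ∈ K k, upperCoeff K w b a k = (w k - a) ⬝ᵥ x + b k := by
  obtain ⟨x, hx, hsup⟩ := (hK.image (by fun_prop : Continuous fun x => (w k - a) ⬝ᵥ x)).sSup_mem
    (hne.image _)
  exact ⟨x, hx, by rw [upperCoeff, ← hsup]⟩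

theorem exists_lowerCoeff_eq {k : Fin d} (hne : (K k).Nonempty) (hK : IsCompact (K k))
    (a : Fin η → ℝ) : ∃ x ∈ K k, lowerCoeff K w b a k = (w k - a) ⬝ᵥ x + b k := by
  obtain ⟨x, hx, hinf⟩ := (hK.image (by fun_prop : Continuous fun x => (w k - a) ⬝ᵥ x)).sInf_mem
    (hne.image _)
  exact ⟨x, hx, by rw [lowerCoeff, ← hinf]⟩

theorem mul_add_le_of_exists_eq {k : Fin d} {α : Fin η → ℝ} {β γ c u : ℝ} (hβ : β ≠ 0)
    (hS : ∀ x ∈ K k, α ⬝ᵥ x + β * affK w b k x + γ ≤ u)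
    (hc : ∃ x ∈ K k, c = (w k - -β⁻¹ • α) ⬝ᵥ x + b k) : β * c + γ ≤ u := by
  obtain ⟨x, hx, rfl⟩ := hc
  calc β * ((w k - -β⁻¹ • α) ⬝ᵥ x + b k) + γ = α ⬝ᵥ x + β * affK w b k x + γ := by
        rw [affK_eq, sub_dotProduct, smul_dotProduct, smul_eq_mul]
        field_simp
        ring
    _ ≤ u := hS x hx

theorem functional_le_of_mem_cayleyEnvelope_of_pos (hne : ∀ k, (K k).Nonempty)
    (hK : ∀ k, IsCompact (K k)) {α : Fin η → ℝ} {β u : ℝ} {γ : Fin d → ℝ} (hβ : 0 < β)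
    (hS : ∀ k, ∀ x ∈ K k, α ⬝ᵥ x + β * affK w b k x + γ k ≤ u)
    {p : (Fin η → ℝ) × ℝ × (Fin d → ℝ)} (hp : p ∈ cayleyEnvelope K w b) :
    α ⬝ᵥ p.1 + β * p.2.1 + γ ⬝ᵥ p.2.2 ≤ u :=
  add_mul_add_dotProduct_le hβ.ne' hp.1
    (fun k => mul_add_le_of_exists_eq hβ.ne' (hS k) (exists_upperCoeff_eq (hne k) (hK k) _))
    (mul_le_mul_of_nonneg_left (hp.2.1 _) hβ.le)

theorem functional_le_of_mem_cayleyEnvelope_of_neg (hne : ∀ k, (K k).Nonempty)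
    (hK : ∀ k, IsCompact (K k)) {α : Fin η → ℝ} {β u : ℝ} {γ : Fin d → ℝ} (hβ : β < 0)
    (hS : ∀ k, ∀ x ∈ K k, α ⬝ᵥ x + β * affK w b k x + γ k ≤ u)
    {p : (Fin η → ℝ) × ℝ × (Fin d → ℝ)} (hp : p ∈ cayleyEnvelope K w b) :
    α ⬝ᵥ p.1 + β * p.2.1 + γ ⬝ᵥ p.2.2 ≤ u :=
  add_mul_add_dotProduct_le hβ.ne hp.1
    (fun k => mul_add_le_of_exists_eq hβ.ne (hS k) (exists_lowerCoeff_eq (hne k) (hK k) _))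
    (mul_le_mul_of_nonpos_left (hp.2.2 _) hβ.le)

theorem functional_le_of_mem_cayleyEnvelope (hne : ∀ k, (K k).Nonempty)
    (hK : ∀ k, IsCompact (K k)) {α : Fin η → ℝ} {β u : ℝ} {γ : Fin d → ℝ}
    (hS : ∀ k, ∀ x ∈ K k, α ⬝ᵥ x + β * affK w b k x + γ k ≤ u)
    {p : (Fin η → ℝ) × ℝ × (Fin d → ℝ)} (hp : p ∈ cayleyEnvelope K w b) :
    α ⬝ᵥ p.1 + β * p.2.1 + γ ⬝ᵥ p.2.2 ≤ u := by
  rcases lt_trichotomy β 0 with hβ | rfl | hβ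
  · exact functional_le_of_mem_cayleyEnvelope_of_neg hne hK hβ hS hp
  · obtain ⟨B, hB⟩ :=
      (isCompact_iUnion fun k => (hK k).image (continuous_affK (w := w) (b := b) k)).bddAbove
    refine le_of_forall_pos_le_add_mul (c := B - p.2.1) fun ε hε => ?_
    have := functional_le_of_mem_cayleyEnvelope_of_pos hne hK hε (α := α) (γ := γ)
      (u := u + ε * B) (fun k x hx => ?_) hp
    · linarith
    · have h1 := hS k x hx
      have h2 := hB (Set.mem_iUnion_of_mem k ⟨x, hx, rfl⟩)
      nlinarith
  · exact functional_le_of_mem_cayleyEnvelope_of_pos hne hK hβ hS hp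

theorem cayleyEnvelope_subset_cayleyHull (hne : ∀ k, (K k).Nonempty)
    (hK : ∀ k, IsCompact (K k)) : cayleyEnvelope K w b ⊆ cayleyHull K w b := by
  intro p hp
  by_contra hpR
  obtain ⟨f, u, hfR, hfp⟩ := geometric_hahn_banach_closed_point (convex_convexHull ℝ _)
    (isCompact_cayleyHull hK).isClosed hpR
  have hf := (f : ((Fin η → ℝ) × ℝ × (Fin d → ℝ)) →ₗ[ℝ] ℝ).apply_prod_prod_eq
  simp only [ContinuousLinearMap.coe_coe] at hf
  refine hfp.not_ge ?_
  rw [hf]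
  refine functional_le_of_mem_cayleyEnvelope hne hK (fun k x hx => ?_) hp
  have := hfR _ (subset_convexHull ℝ _ (Set.mem_iUnion_of_mem k ⟨x, hx, rfl⟩))
  rw [hf, dotProduct_single, mul_one] at this
  exact this.le

theorem cayleyHull_eq_cayleyEnvelope (hne : ∀ k, (K k).Nonempty) (hK : ∀ k, IsCompact (K k)) :
    cayleyHull K w b = cayleyEnvelope K w b :=
  (cayleyHull_subset_cayleyEnvelope hK).antisymm (cayleyEnvelope_subset_cayleyHull hne hK)

theorem cayleyHull_subset_fst_preimage {D : Set (Fin η → ℝ)} (hD : Convex ℝ D)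
    (hKD : ∀ k, K k ⊆ D) : cayleyHull K w b ⊆ Prod.fst ⁻¹' D :=
  convexHull_min (Set.iUnion_subset fun k => by rintro _ ⟨x, hx, rfl⟩; exact hKD k hx)
    (hD.linear_preimage (LinearMap.fst ℝ _ _))

end Cayley

theorem dotp_eq_dotProduct {n : ℕ} (w x : Fin n → ℝ) : dotp w x = w ⬝ᵥ x := rfl

theorem isClosed_setOf_forall_dotp_le {m n : ℕ} (A : Fin m → Fin n → ℝ) (c : Fin m → ℝ) :
    IsClosed {x | ∀ i, dotp (A i) x ≤ c i} := by
  simp only [dotp_eq_dotProduct, Set.ofPred_forall]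
  exact isClosed_iInter fun i => isClosed_le (by fun_prop) continuous_const

theorem convex_setOf_forall_dotp_le {m n : ℕ} (A : Fin m → Fin n → ℝ) (c : Fin m → ℝ) :
    Convex ℝ {x | ∀ i, dotp (A i) x ≤ c i} := by
  simp only [dotp_eq_dotProduct, Set.ofPred_forall]
  exact convex_iInter fun i =>
    convex_halfSpace_le ⟨dotProduct_add (A i), fun t x => dotProduct_smul t (A i) x⟩ (c i)

theorem isCompact_drestrK {η d : ℕ} {D : Set (Fin η → ℝ)} (hD : IsClosed D)
    (hDbd : Bornology.IsBounded D) (w : Fin d → Fin η → ℝ) (b : Fin d → ℝ) (k : Fin d) :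
    IsCompact (DrestrK D w b k) := by
  refine Metric.isCompact_of_isClosed_isBounded ?_ (hDbd.subset (Set.sep_subset _ _))
  show IsClosed (D ∩ {x | ∀ ℓ, affK w b ℓ x ≤ affK w b k x})
  simp only [Set.ofPred_forall]
  exact hD.inter (isClosed_iInter fun ℓ => isClosed_le (continuous_affK ℓ) (continuous_affK k))

/-- The maxima and minima over `D_{|k}` are written as `sSup` and `sInf`, which attain them since
each `D_{|k}` is nonempty and compact. -/
theorem stmt2_general {η d : ℕ}
    (w : Fin d → Fin η → ℝ) (b : Fin d → ℝ)
    (D : Set (Fin η → ℝ))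
    (hDpoly : ∃ (m : ℕ) (A : Fin m → Fin η → ℝ) (c : Fin m → ℝ),
      D = {x | ∀ i, dotp (A i) x ≤ c i})
    (hDbd : Bornology.IsBounded D)
    (hirr : ∀ k, ∃ x ∈ D, ∀ ℓ, ℓ ≠ k → affK w b ℓ x < affK w b k x) :
    Rcayley D w b = {p : (Fin η → ℝ) × ℝ × (Fin d → ℝ) |
      p.1 ∈ D ∧ p.2.2 ∈ stdSimplex ℝ (Fin d)
      ∧ (∀ a : Fin η → ℝ,
          p.2.1 ≤ dotp a p.1
            + ∑ k, (sSup ((fun x' => dotp (w k - a) x') '' DrestrK D w b k) + b k) * p.2.2 k)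
      ∧ (∀ a : Fin η → ℝ,
          dotp a p.1
            + ∑ k, (sInf ((fun x' => dotp (w k - a) x') '' DrestrK D w b k) + b k) * p.2.2 k
            ≤ p.2.1)} := by
  obtain ⟨m, A, c, hD⟩ := hDpoly
  have hne (k : Fin d) : (DrestrK D w b k).Nonempty := by
    obtain ⟨x, hxD, hx⟩ := hirr k
    exact ⟨x, hxD, fun ℓ => (eq_or_ne ℓ k).elim (fun h => h ▸ le_rfl) fun h => (hx ℓ h).le⟩
  have hK := isCompact_drestrK (hD ▸ isClosed_setOf_forall_dotp_le A c) hDbd w b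
  have hR : Rcayley D w b = cayleyEnvelope (DrestrK D w b) w b :=
    cayleyHull_eq_cayleyEnvelope hne hK
  ext p
  refine ⟨fun hp => ⟨?_, hR.subset hp⟩, fun hp => hR.symm.subset hp.2⟩
  exact cayleyHull_subset_fst_preimage (hD ▸ convex_setOf_forall_dotp_le A c)
    (fun k => Set.sep_subset _ _) hp

/-- The dual characterization of the Cayley embedding.  Since each `D_{|k}` is a nonempty
compact set, the maxima/minima over `D_{|k}` are attained and coincide with `sSup`/`sInf`
of the corresponding image sets. -/
theorem stmt2 {η d : ℕ} (hη : 1 ≤ η) (hd : 1 ≤ d)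
    (w : Fin d → Fin η → ℝ) (b : Fin d → ℝ)
    (D : Set (Fin η → ℝ))
    (hDpoly : ∃ (m : ℕ) (A : Fin m → Fin η → ℝ) (c : Fin m → ℝ),
      D = {x | ∀ i, dotp (A i) x ≤ c i})
    (hDne : D.Nonempty) (hDbd : Bornology.IsBounded D)
    (hirr : ∀ k, ∃ x ∈ D, ∀ ℓ, ℓ ≠ k → affK w b ℓ x < affK w b k x) :
    Rcayley D w b = {p : (Fin η → ℝ) × ℝ × (Fin d → ℝ) |
      p.1 ∈ D ∧ p.2.2 ∈ stdSimplex ℝ (Fin d)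
      ∧ (∀ a : Fin η → ℝ,
          p.2.1 ≤ dotp a p.1
            + ∑ k, (sSup ((fun x' => dotp (w k - a) x') '' DrestrK D w b k) + b k) * p.2.2 k)
      ∧ (∀ a : Fin η → ℝ,
          dotp a p.1
            + ∑ k, (sInf ((fun x' => dotp (w k - a) x') '' DrestrK D w b k) + b k) * p.2.2 k
            ≤ p.2.1)} :=
  stmt2_general w b D hDpoly hDbd hirr
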